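/- arXiv:1907.10583 — 2 statements merged into one kernel-verified Lean document; each statement's English description precedes it below -/
import Mathlib

section
/- Let V be a finite type, N ∈ ℕ, and Ω := {η : V → ℕ | Σ_x η_x ≤ N}. Let 𝒜 be the annihilation operator on functions Ω → ℝ, (𝒜f)(η) := Σ_{x ∈ V} η_x · f(η − δ_x). Let L be a linear operator on functions Ω → ℝ that commutes with 𝒜 and preserves each particle-number sector (for every k ≤ N, L maps functions vanishing outside Ω_k := {η : |η| = k} to functions vanishing outside Ω_k). Then for every t ∈ ℝ, every x = (x_1,…,x_n) ∈ V^n with n ≤ N, and every configuration ξ with |ξ| = m where 1 ≤ m < n: (exp(t·L)(F(ξ,·)))(φ(x)) = Σ_{S ⊆ {1,…,n}, |S| = m} (exp(t·L) h_ξ)(φ(x|_S)), where h_ξ is the indicator function of the configuration ξ (h_ξ(η) = 1 if η = ξ, else 0) and x|_S denotes the subfamily (x_i)_{i ∈ S}. -/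
/-- Configurations on `V` with at most `N` particles. -/
abbrev Conf (V : Type*) [Fintype V] (N : ℕ) := {η : V → ℕ // ∑ x, η x ≤ N}

noncomputable instance Conf.fintype (V : Type*) [Fintype V] [DecidableEq V] (N : ℕ) :
    Fintype (Conf V N) :=
  Fintype.ofInjective
    (fun η : Conf V N =>
      (fun x => ⟨η.1 x, Nat.lt_succ_of_le
        ((Finset.single_le_sum (f := η.1) (fun i _ => Nat.zero_le _)
          (Finset.mem_univ x)).trans η.2)⟩ : V → Fin (N + 1)))
    (by
      intro a b h
      apply Subtype.ext
      funext x
      exact congrArg Fin.val (congrFun h x))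

/-- `η - δ_x` : remove one particle at `x`. -/
def removeAt {V : Type*} [Fintype V] [DecidableEq V] {N : ℕ}
    (η : Conf V N) (x : V) : Conf V N :=
  ⟨fun y => η.1 y - (if y = x then 1 else 0),
    le_trans (Finset.sum_le_sum fun i _ => Nat.sub_le _ _) η.2⟩

/-- The annihilation operator `(𝒜 f)(η) = ∑_x η_x f(η - δ_x)`. -/
noncomputable def ann {V : Type*} [Fintype V] [DecidableEq V] {N : ℕ}
    (f : Conf V N → ℝ) : Conf V N → ℝ :=
  fun η => ∑ x : V, (η.1 x : ℝ) * f (removeAt η x)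

/-- `F ξ η = ∏_{x ∈ V} C(η x, ξ x)`. -/
def Ffun {V : Type*} [Fintype V] {N : ℕ} (ξ η : Conf V N) : ℕ :=
  ∏ x : V, Nat.choose (η.1 x) (ξ.1 x)

/-- The configuration `φ((xᵢ)_{i ∈ S}) = ∑_{i ∈ S} δ_{xᵢ}` of a subfamily of
labeled particle positions, as an element of `Conf V N` (for `n ≤ N`). -/
def phiS {V : Type*} [Fintype V] [DecidableEq V] {N n : ℕ} (hn : n ≤ N)
    (x : Fin n → V) (S : Finset (Fin n)) : Conf V N :=
  ⟨fun y => ∑ i ∈ S, if x i = y then 1 else 0, by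
    calc ∑ y : V, ∑ i ∈ S, (if x i = y then (1 : ℕ) else 0)
        = ∑ i ∈ S, ∑ y : V, (if x i = y then (1 : ℕ) else 0) := Finset.sum_comm
      _ = ∑ _i ∈ S, 1 := by
            refine Finset.sum_congr rfl fun i _ => ?_
            simp [Finset.sum_ite_eq]
      _ = S.card := by simp
      _ ≤ n := by simpa using Finset.card_le_univ S
      _ ≤ N := hn⟩

/-- Operator exponential `exp(t L)` on the finite-dimensional space of functions. -/
noncomputable def expOp {Ω : Type*} [Fintype Ω] (t : ℝ) (L : (Ω → ℝ) →ₗ[ℝ] (Ω → ℝ)) :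
    (Ω → ℝ) →L[ℝ] (Ω → ℝ) :=
  NormedSpace.exp (t • (LinearMap.toContinuousLinearMap L))

/-!
Write `h_ξ` for the indicator of `ξ` and `k = n - m`. Since `𝒜 F(ξ,·)(η) = (|η| - |ξ|) F(ξ,η)`
and `F(ξ,η) = [η = ξ]` when `|η| = |ξ|`, induction gives `𝒜^k h_ξ = k! F(ξ,·)` on the sector
`|η| = n`. On the other hand `𝒜` applied at `φ(x)` removes one labelled particle in every
possible way, so `(𝒜^k g)(φ(x)) = k! ∑_{|S| = m} g(φ(x|_S))`. Because `L` preserves sectors it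
commutes with the projections onto them, so `exp(tL) f` at `φ(x)` only sees `f` on the sector
`|η| = n`; and `exp(tL)` commutes with `𝒜`. Hence
`exp(tL) F(ξ,·) (φ(x)) = (k!)⁻¹ 𝒜^k (exp(tL) h_ξ) (φ(x)) = ∑_{|S| = m} exp(tL) h_ξ (φ(x|_S))`.
-/

open Finset
open scoped Nat

theorem expOp_apply_of_commute {Ω : Type*} [Fintype Ω] {L A : (Ω → ℝ) →ₗ[ℝ] (Ω → ℝ)}
    (h : Commute L A) (t : ℝ) (f : Ω → ℝ) : expOp t L (A f) = A (expOp t L f) := by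
  have hc : Commute (LinearMap.toContinuousLinearMap L) (LinearMap.toContinuousLinearMap A) :=
    ContinuousLinearMap.ext fun g => LinearMap.congr_fun h g
  exact DFunLike.congr_fun ((hc.smul_left t).exp_left) f

section FiberRestrict

variable {Ω ι : Type*} [DecidableEq ι]

def fiberRestrict (σ : Ω → ι) (k : ι) : (Ω → ℝ) →ₗ[ℝ] (Ω → ℝ) where
  toFun f η := if σ η = k then f η else 0
  map_add' f g := by funext η; split_ifs <;> simp [*]
  map_smul' c f := by funext η; split_ifs <;> simp [*]

theorem fiberRestrict_apply (σ : Ω → ι) (k : ι) (f : Ω → ℝ) (η : Ω) :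
    fiberRestrict σ k f η = if σ η = k then f η else 0 := rfl

variable [Fintype Ω]

theorem sum_fiberRestrict (σ : Ω → ι) (f : Ω → ℝ) :
    ∑ k ∈ univ.image σ, fiberRestrict σ k f = f := by
  funext η
  simp [Finset.sum_apply, fiberRestrict_apply]

variable {σ : Ω → ι} {L : (Ω → ℝ) →ₗ[ℝ] (Ω → ℝ)}

theorem commute_fiberRestrict
    (hL : ∀ k ∈ Set.range σ, ∀ f : Ω → ℝ, (∀ η, σ η ≠ k → f η = 0) → ∀ η, σ η ≠ k → L f η = 0)
    {k : ι} (hk : k ∈ Set.range σ) : Commute L (fiberRestrict σ k) := by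
  have hoff : ∀ j ∈ Set.range σ, ∀ f η, σ η ≠ j → L (fiberRestrict σ j f) η = 0 :=
    fun j hj f => hL j hj _ fun η hη => if_neg hη
  refine LinearMap.ext fun f => funext fun η => ?_
  change L (fiberRestrict σ k f) η = fiberRestrict σ k (L f) η
  rw [fiberRestrict_apply]
  split_ifs with hη
  · conv_rhs => rw [← sum_fiberRestrict σ f, map_sum, Finset.sum_apply]
    refine (sum_eq_single_of_mem k ?_ fun j hj hjk => hoff j ?_ f η ?_).symm
    · obtain ⟨η', rfl⟩ := hk; exact mem_image_of_mem σ (mem_univ η')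
    · simpa [eq_comm] using hj
    · rwa [hη, Ne, eq_comm]
  · exact hoff k hk f η hη

theorem expOp_apply_congr_fiber
    (hL : ∀ k ∈ Set.range σ, ∀ f : Ω → ℝ, (∀ η, σ η ≠ k → f η = 0) → ∀ η, σ η ≠ k → L f η = 0)
    (t : ℝ) {f g : Ω → ℝ} {η₀ : Ω} (hfg : ∀ η, σ η = σ η₀ → f η = g η) :
    expOp t L f η₀ = expOp t L g η₀ := by
  have hcomm := commute_fiberRestrict hL (Set.mem_range_self η₀)
  have hfg' : fiberRestrict σ (σ η₀) f = fiberRestrict σ (σ η₀) g := by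
    funext η
    simp only [fiberRestrict_apply]
    split_ifs with hη
    · exact hfg η hη
    · rfl
  calc expOp t L f η₀ = fiberRestrict σ (σ η₀) (expOp t L f) η₀ := by simp [fiberRestrict_apply]
    _ = fiberRestrict σ (σ η₀) (expOp t L g) η₀ := by
      rw [← expOp_apply_of_commute hcomm, hfg', expOp_apply_of_commute hcomm]
    _ = expOp t L g η₀ := by simp [fiberRestrict_apply]

end FiberRestrict

section FactorialMoments

theorem mul_choose_sub_one (a b : ℕ) : a * (a - 1).choose b = (a - b) * a.choose b := by
  cases a with
  | zero => simp
  | succ c => rw [Nat.add_sub_cancel, mul_comm, Nat.choose_mul_succ_eq, mul_comm]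

variable {V : Type*} [Fintype V] {N : ℕ}

theorem Ffun_ne_zero_iff {ξ η : Conf V N} : Ffun ξ η ≠ 0 ↔ ∀ y, ξ.1 y ≤ η.1 y := by
  simp [Ffun, prod_ne_zero_iff, Nat.choose_eq_zero_iff]

theorem Ffun_of_sum_eq {ξ η : Conf V N} (h : ∑ y, η.1 y = ∑ y, ξ.1 y) :
    Ffun ξ η = if η = ξ then 1 else 0 := by
  split_ifs with hηξ
  · simp [hηξ, Ffun]
  · by_contra hF
    have hle := Ffun_ne_zero_iff.1 hF
    exact hηξ <| Subtype.ext <| funext fun y =>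
      ((sum_eq_sum_iff_of_le fun y _ => hle y).1 h.symm y (mem_univ y)).symm

variable [DecidableEq V]

theorem sum_removeAt (η : Conf V N) {x : V} (hx : η.1 x ≠ 0) :
    ∑ y, (removeAt η x).1 y = ∑ y, η.1 y - 1 := by
  have hle : ∀ y ∈ univ, (if y = x then 1 else 0) ≤ η.1 y := fun y _ => by
    split_ifs with h
    · subst h; omega
    · exact Nat.zero_le _
  rw [removeAt, sum_tsub_distrib _ hle]
  simp

theorem mul_Ffun_removeAt (ξ η : Conf V N) (x : V) :
    η.1 x * Ffun ξ (removeAt η x) = (η.1 x - ξ.1 x) * Ffun ξ η := by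
  have hrest : ∀ y ∈ univ.erase x,
      ((removeAt η x).1 y).choose (ξ.1 y) = (η.1 y).choose (ξ.1 y) :=
    fun y hy => by simp [removeAt, ne_of_mem_erase hy]
  rw [Ffun, Ffun, ← mul_prod_erase _ _ (mem_univ x),
    ← mul_prod_erase _ _ (mem_univ x), prod_congr rfl hrest, ← mul_assoc,
    ← mul_assoc, ← mul_choose_sub_one]
  simp [removeAt]

theorem ann_Ffun (ξ η : Conf V N) :
    ann (fun ζ => (Ffun ξ ζ : ℝ)) η = ((∑ y, η.1 y - ∑ y, ξ.1 y : ℕ) : ℝ) * Ffun ξ η := by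
  have hnat : ∑ x, η.1 x * Ffun ξ (removeAt η x) = (∑ y, η.1 y - ∑ y, ξ.1 y) * Ffun ξ η := by
    simp_rw [mul_Ffun_removeAt, ← sum_mul]
    by_cases hF : Ffun ξ η = 0
    · simp [hF]
    · rw [sum_tsub_distrib _ fun y _ => Ffun_ne_zero_iff.1 hF y]
  simp only [ann]
  exact_mod_cast hnat

theorem iterate_ann_indicator (ξ : Conf V N) (k : ℕ) {η : Conf V N}
    (hη : ∑ y, η.1 y = ∑ y, ξ.1 y + k) :
    ann^[k] (fun ζ => if ζ = ξ then 1 else 0) η = (k ! : ℝ) * Ffun ξ η := by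
  induction k generalizing η with
  | zero => simp [Ffun_of_sum_eq hη]
  | succ k ih =>
    have hterm : ∀ x, (η.1 x : ℝ) * ann^[k] (fun ζ => if ζ = ξ then 1 else 0) (removeAt η x)
        = (k ! : ℝ) * ((η.1 x : ℝ) * Ffun ξ (removeAt η x)) := by
      intro x
      by_cases hx : η.1 x = 0
      · simp [hx]
      · rw [ih (η := removeAt η x) (by rw [sum_removeAt η hx]; omega)]; ring
    calc ann^[k + 1] (fun ζ => if ζ = ξ then 1 else 0) η
        = ∑ x, (η.1 x : ℝ) * ann^[k] (fun ζ => if ζ = ξ then 1 else 0) (removeAt η x) := by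
          rw [Function.iterate_succ_apply']; rfl
      _ = (k ! : ℝ) * ann (fun ζ => (Ffun ξ ζ : ℝ)) η := by
          simp_rw [hterm]; rw [← mul_sum]; rfl
      _ = ((k + 1)! : ℝ) * Ffun ξ η := by
          rw [ann_Ffun, hη, Nat.add_sub_cancel_left, Nat.factorial_succ]
          push_cast
          ring

end FactorialMoments

theorem sum_powersetCard_succ_sum_erase {α M : Type*} [DecidableEq α] [AddCommMonoid M]
    (S : Finset α) (r : ℕ) (f : Finset α → M) :
    ∑ T ∈ S.powersetCard (r + 1), ∑ i ∈ T, f (T.erase i)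
      = (#S - r) • ∑ U ∈ S.powersetCard r, f U := by
  have hpairs : ∑ T ∈ S.powersetCard (r + 1), ∑ i ∈ T, f (T.erase i)
      = ∑ U ∈ S.powersetCard r, ∑ _i ∈ S \ U, f U := by
    rw [sum_sigma', sum_sigma']
    refine sum_nbij' (fun p => ⟨p.1.erase p.2, p.2⟩) (fun p => ⟨insert p.2 p.1, p.2⟩)
      ?_ ?_ ?_ ?_ fun _ _ => rfl
    · rintro ⟨T, i⟩ hp
      simp only [mem_sigma, mem_powersetCard] at hp ⊢
      exact ⟨⟨(erase_subset _ _).trans hp.1.1, by rw [card_erase_of_mem hp.2, hp.1.2]; rfl⟩,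
        mem_sdiff.2 ⟨hp.1.1 hp.2, notMem_erase _ _⟩⟩
    · rintro ⟨U, i⟩ hp
      simp only [mem_sigma, mem_powersetCard, mem_sdiff] at hp ⊢
      exact ⟨⟨insert_subset hp.2.1 hp.1.1, by rw [card_insert_of_notMem hp.2.2, hp.1.2]⟩,
        mem_insert_self _ _⟩
    · rintro ⟨T, i⟩ hp
      simp only [mem_sigma] at hp
      simp [insert_erase hp.2]
    · rintro ⟨U, i⟩ hp
      simp only [mem_sigma, mem_sdiff] at hp
      simp [erase_insert hp.2.2]
  rw [hpairs, smul_sum]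
  refine sum_congr rfl fun U hU => ?_
  rw [mem_powersetCard] at hU
  rw [sum_const, card_sdiff_of_subset hU.1, hU.2]

section LabeledParticles

variable {V : Type*} [Fintype V] [DecidableEq V] {N n : ℕ} (hn : n ≤ N) (x : Fin n → V)

theorem sum_phiS (S : Finset (Fin n)) : ∑ y, (phiS hn x S).1 y = #S := by
  simp only [phiS]
  rw [sum_comm]
  simp

theorem removeAt_phiS {S : Finset (Fin n)} {i : Fin n} (hi : i ∈ S) :
    removeAt (phiS hn x S) (x i) = phiS hn x (S.erase i) := by
  refine Subtype.ext <| funext fun y => ?_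
  change (∑ j ∈ S, if x j = y then 1 else 0) - (if y = x i then 1 else 0)
      = ∑ j ∈ S.erase i, if x j = y then 1 else 0
  rw [← add_sum_erase S _ hi]
  by_cases h : x i = y
  · simp [h]
  · simp [h, Ne.symm h]

theorem ann_phiS (g : Conf V N → ℝ) (S : Finset (Fin n)) :
    ann g (phiS hn x S) = ∑ i ∈ S, g (phiS hn x (S.erase i)) := by
  calc ann g (phiS hn x S)
      = ∑ y, ∑ i ∈ S, if x i = y then g (removeAt (phiS hn x S) y) else 0 := by
        simp only [ann, phiS, Nat.cast_sum, sum_mul]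
        simp
    _ = ∑ i ∈ S, g (phiS hn x (S.erase i)) := by
        rw [sum_comm]
        exact sum_congr rfl fun i hi => by simp [removeAt_phiS hn x hi]

theorem iterate_ann_phiS (g : Conf V N → ℝ) (k : ℕ) {r : ℕ} {S : Finset (Fin n)}
    (hS : #S = r + k) :
    ann^[k] g (phiS hn x S) = (k ! : ℝ) * ∑ T ∈ S.powersetCard r, g (phiS hn x T) := by
  induction k generalizing g r with
  | zero =>
    subst hS
    simp [powersetCard_self]
  | succ k ih =>
    rw [Function.iterate_succ_apply, ih (ann g) (r := r + 1) (by omega)]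
    simp_rw [ann_phiS]
    rw [sum_powersetCard_succ_sum_erase S r fun U => g (phiS hn x U), hS, Nat.add_sub_cancel_left,
      Nat.factorial_succ, nsmul_eq_mul]
    push_cast
    ring

end LabeledParticles

section Annihilation

variable {V : Type*} [Fintype V] [DecidableEq V] {N : ℕ}

noncomputable def annLM : (Conf V N → ℝ) →ₗ[ℝ] (Conf V N → ℝ) where
  toFun := ann
  map_add' f g := by funext η; simp [ann, mul_add, sum_add_distrib]
  map_smul' c f := by funext η; simp [ann, mul_sum, mul_left_comm]

theorem annLM_pow_apply (k : ℕ) (f : Conf V N → ℝ) : (annLM ^ k) f = ann^[k] f :=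
  Module.End.pow_apply annLM k f

end Annihilation

theorem stmt4_general {V : Type*} [Fintype V] [DecidableEq V] (N : ℕ)
    (L : (Conf V N → ℝ) →ₗ[ℝ] (Conf V N → ℝ))
    (hcomm : ∀ f, L (ann f) = ann (L f))
    (hsector : ∀ k ≤ N, ∀ f : Conf V N → ℝ,
        (∀ η : Conf V N, (∑ x, η.1 x) ≠ k → f η = 0) →
        ∀ η : Conf V N, (∑ x, η.1 x) ≠ k → L f η = 0)
    (t : ℝ) (n : ℕ) (hn : n ≤ N) (x : Fin n → V)
    (ξ : Conf V N) (m : ℕ) (hmn : m < n) (hξ : (∑ y, ξ.1 y) = m) :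
    expOp t L (fun η => (Ffun ξ η : ℝ)) (phiS hn x Finset.univ)
      = ∑ S ∈ Finset.powersetCard m (Finset.univ : Finset (Fin n)),
          expOp t L (fun η => if η = ξ then 1 else 0) (phiS hn x S) := by
  obtain ⟨k, rfl⟩ := Nat.exists_eq_add_of_le hmn.le
  set h : Conf V N → ℝ := fun η => if η = ξ then 1 else 0
  have hfac : (k ! : ℝ) ≠ 0 := by positivity
  have hA : Commute L (annLM ^ k) := (show Commute L annLM from LinearMap.ext hcomm).pow_right k
  calc expOp t L (fun η => (Ffun ξ η : ℝ)) (phiS hn x univ)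
      = expOp t L ((k ! : ℝ)⁻¹ • (annLM ^ k) h) (phiS hn x univ) := by
        refine expOp_apply_congr_fiber (σ := fun η : Conf V N => ∑ y, η.1 y)
          (fun j ⟨η, hη⟩ => hsector j (hη ▸ η.2)) t fun η hη => ?_
        rw [sum_phiS, card_univ, Fintype.card_fin, ← hξ] at hη
        rw [Pi.smul_apply, annLM_pow_apply, iterate_ann_indicator ξ k hη, smul_eq_mul,
          inv_mul_cancel_left₀ hfac]
    _ = (k ! : ℝ)⁻¹ * ann^[k] (expOp t L h) (phiS hn x univ) := by
        rw [map_smul, expOp_apply_of_commute hA, annLM_pow_apply]; rfl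
    _ = ∑ S ∈ powersetCard m univ, expOp t L h (phiS hn x S) := by
        rw [iterate_ann_phiS hn x _ k (r := m) (by simp), inv_mul_cancel_left₀ hfac]

/-- **Recursion for factorial moments** (Theorem 3.3): for a consistent,
particle-number-conserving configuration process, the time-`t` expectation of the
factorial-moment function `F(ξ,·)` of order `m`, started from `n > m` particles at
positions `x`, equals the sum over all `m`-element subsamples of the initial particles
of the `m`-particle transition probabilities into `ξ`. -/
theorem stmt4 {V : Type*} [Fintype V] [DecidableEq V] (N : ℕ)
    (L : (Conf V N → ℝ) →ₗ[ℝ] (Conf V N → ℝ))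
    (hcomm : ∀ f, L (ann f) = ann (L f))
    (hsector : ∀ k ≤ N, ∀ f : Conf V N → ℝ,
        (∀ η : Conf V N, (∑ x, η.1 x) ≠ k → f η = 0) →
        ∀ η : Conf V N, (∑ x, η.1 x) ≠ k → L f η = 0)
    (t : ℝ) (n : ℕ) (hn : n ≤ N) (x : Fin n → V)
    (ξ : Conf V N) (m : ℕ) (hm1 : 1 ≤ m) (hmn : m < n) (hξ : (∑ y, ξ.1 y) = m) :
    expOp t L (fun η => (Ffun ξ η : ℝ)) (phiS hn x Finset.univ)
      = ∑ S ∈ Finset.powersetCard m (Finset.univ : Finset (Fin n)),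
          expOp t L (fun η => if η = ξ then 1 else 0) (phiS hn x S) :=
  stmt4_general N L hcomm hsector t n hn x ξ m hmn hξ
end

section
/- Let V be a finite type, N ∈ ℕ, Ω := {η : V → ℕ | Σ_x η_x ≤ N}, and 𝒜 the annihilation operator on functions Ω → ℝ, (𝒜f)(η) := Σ_{x ∈ V} η_x · f(η − δ_x). Let L be a linear operator on functions Ω → ℝ commuting with 𝒜 and preserving each particle-number sector (for every k ≤ N, L maps functions vanishing outside Ω_k := {η : |η| = k} to functions vanishing outside Ω_k). Then for every t ∈ ℝ and all ξ, η ∈ Ω with 1 ≤ |ξ| < |η|: (exp(t·L)(F(ξ,·)))(η) = (|η| − |ξ|)^{-1} · Σ_{i ∈ V} η_i · (exp(t·L)(F(ξ,·)))(η − δ_i). -/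
/-! `F(ξ,·)` is an eigenfunction of the annihilation operator up to a function of the particle
number: `𝒜 F(ξ,·) = (|·| - |ξ|) F(ξ,·)`, termwise from `n C(n-1,k) = (n-k) C(n,k)`.
Sector preservation makes `L` commute with multiplication by any function of `|·|`, and `L`
commutes with `𝒜`; hence so does `exp(tL)`, and `g := exp(tL) F(ξ,·)` satisfies the same relation
`𝒜 g = (|·| - |ξ|) g`. Evaluated at `η` this is the claimed average, since `|η| ≠ |ξ|`. -/

open Finset

lemma Nat.cast_mul_choose_sub_one {R : Type*} [CommRing R] (n k : ℕ) :
    (n : R) * (n - 1).choose k = ((n : R) - k) * n.choose k := by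
  rcases n with _ | m
  · cases k <;> simp
  rcases le_or_gt k (m + 1) with hk | hk
  · have h := congrArg (Nat.cast (R := R)) (Nat.choose_mul_succ_eq m k)
    push_cast [Nat.cast_sub hk] at h
    simp only [Nat.add_sub_cancel, Nat.cast_add, Nat.cast_one]
    linear_combination h
  · simp [Nat.choose_eq_zero_of_lt hk, Nat.choose_eq_zero_of_lt (Nat.lt_of_succ_lt hk)]

lemma LinearMap.map_mul_comp_of_preserves_fibers {Ω α R : Type*} [Fintype Ω] [DecidableEq Ω]
    [CommSemiring R] (φ : Ω → α) (L : (Ω → R) →ₗ[R] (Ω → R))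
    (hL : ∀ a f, (∀ ω, φ ω ≠ a → f ω = 0) → ∀ ω, φ ω ≠ a → L f ω = 0)
    (c : α → R) (f : Ω → R) :
    L ((c ∘ φ) * f) = (c ∘ φ) * L f := by
  funext ω
  have hsingle : ∀ ω' x, c (φ ω') * L (Pi.single ω' x) ω = c (φ ω) * L (Pi.single ω' x) ω := by
    intro ω' x
    by_cases h : φ ω = φ ω'
    · rw [h]
    · have hsupp : ∀ ν, φ ν ≠ φ ω' → (Pi.single ω' x : Ω → R) ν = 0 := by
        rintro ν hν
        exact Pi.single_eq_of_ne (M := fun _ => R) (fun h => hν (congrArg φ h)) x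
      rw [hL _ _ hsupp ω h, mul_zero, mul_zero]
  calc L ((c ∘ φ) * f) ω
      = ∑ ω', c (φ ω') * L (Pi.single ω' (f ω')) ω := by
        rw [← univ_sum_single ((c ∘ φ) * f), map_sum, Finset.sum_apply]
        refine sum_congr rfl fun ω' _ => ?_
        rw [Pi.mul_apply, Function.comp_apply, ← smul_eq_mul, Pi.single_smul', map_smul,
          Pi.smul_apply, smul_eq_mul]
    _ = ∑ ω', c (φ ω) * L (Pi.single ω' (f ω')) ω := sum_congr rfl fun ω' _ => hsingle ω' _
    _ = ((c ∘ φ) * L f) ω := by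
        rw [← mul_sum, ← Finset.sum_apply, ← map_sum, univ_sum_single]
        rfl

lemma expOp_apply_comm {Ω : Type*} [Fintype Ω] (t : ℝ) {L B : Module.End ℝ (Ω → ℝ)}
    (h : Commute L B) (f : Ω → ℝ) :
    expOp t L (B f) = B (expOp t L f) := by
  have h' := ((h.map (Module.End.toContinuousLinearMap (Ω → ℝ))).smul_left t).exp_left
  exact congrArg (fun T : (Ω → ℝ) →L[ℝ] (Ω → ℝ) => T f) h'.eq

section Annihilation

variable {V : Type*} [Fintype V] [DecidableEq V] {N : ℕ}

variable (V N) in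
noncomputable def annihilation : Module.End ℝ (Conf V N → ℝ) where
  toFun := ann
  map_add' f g := by
    funext η
    simp only [ann, Pi.add_apply, mul_add, sum_add_distrib]
  map_smul' c f := by
    funext η
    simp only [ann, Pi.smul_apply, smul_eq_mul, mul_sum, RingHom.id_apply, mul_left_comm]

lemma ann_Ffun_apply (ξ η : Conf V N) :
    ann (fun ζ => (Ffun ξ ζ : ℝ)) η
      = (∑ x, (η.1 x : ℝ) - ∑ x, (ξ.1 x : ℝ)) * Ffun ξ η := by
  have hterm : ∀ x, (η.1 x : ℝ) * Ffun ξ (removeAt η x) = ((η.1 x : ℝ) - ξ.1 x) * Ffun ξ η := by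
    intro x
    have hrest : ∏ y ∈ univ.erase x, ((removeAt η x).1 y).choose (ξ.1 y)
        = ∏ y ∈ univ.erase x, (η.1 y).choose (ξ.1 y) :=
      prod_congr rfl fun y hy => by simp [removeAt, ne_of_mem_erase hy]
    have hx : (removeAt η x).1 x = η.1 x - 1 := by simp [removeAt]
    simp only [Ffun, ← mul_prod_erase univ _ (mem_univ x), hrest, hx, Nat.cast_mul,
      ← mul_assoc, Nat.cast_mul_choose_sub_one]
  simp only [ann, hterm, ← sum_mul, sum_sub_distrib]

end Annihilation

theorem stmt7_general {V : Type*} [Fintype V] [DecidableEq V] (N : ℕ)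
    (L : (Conf V N → ℝ) →ₗ[ℝ] (Conf V N → ℝ))
    (hcomm : ∀ f, L (ann f) = ann (L f))
    (hsector : ∀ k ≤ N, ∀ f : Conf V N → ℝ,
        (∀ η : Conf V N, (∑ x, η.1 x) ≠ k → f η = 0) →
        ∀ η : Conf V N, (∑ x, η.1 x) ≠ k → L f η = 0)
    (t : ℝ) (ξ η : Conf V N)
    (hξη : (∑ x, ξ.1 x) < ∑ x, η.1 x) :
    expOp t L (fun ζ => (Ffun ξ ζ : ℝ)) η
      = ((∑ x, η.1 x : ℝ) - (∑ x, ξ.1 x : ℝ))⁻¹ *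
          ∑ i : V, (η.1 i : ℝ) * expOp t L (fun ζ => (Ffun ξ ζ : ℝ)) (removeAt η i) := by
  set F : Conf V N → ℝ := fun ζ => (Ffun ξ ζ : ℝ)
  set size : Conf V N → ℕ := fun ζ => ∑ x, ζ.1 x
  set c : ℕ → ℝ := fun k => (k : ℝ) - ∑ x, (ξ.1 x : ℝ)
  -- sectors with more than `N` particles are empty, so `hsector` covers every fibre of `size`
  have hfibers : ∀ k f, (∀ ζ, size ζ ≠ k → f ζ = 0) → ∀ ζ, size ζ ≠ k → L f ζ = 0 := by
    intro k f hf ζ hζ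
    by_cases hk : k ≤ N
    · exact hsector k hk f hf ζ hζ
    · have hf0 : f = 0 := funext fun ν => hf ν fun h => hk (h ▸ ν.2)
      rw [hf0, map_zero, Pi.zero_apply]
  have hann : Commute L (annihilation V N) := LinearMap.ext hcomm
  have hsize : Commute L (LinearMap.mulLeft ℝ (c ∘ size)) :=
    LinearMap.ext (LinearMap.map_mul_comp_of_preserves_fibers size L hfibers c)
  have hF : annihilation V N F = (c ∘ size) * F := by
    funext ζ
    change ann F ζ = _
    rw [ann_Ffun_apply, Pi.mul_apply, Function.comp_apply]
    simp only [c, size, F, Nat.cast_sum]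
  have hg : ann (expOp t L F) = (c ∘ size) * expOp t L F :=
    calc annihilation V N (expOp t L F)
        = expOp t L (LinearMap.mulLeft ℝ (c ∘ size) F) := by
          rw [← expOp_apply_comm t hann, hF, LinearMap.mulLeft_apply]
      _ = (c ∘ size) * expOp t L F := expOp_apply_comm t hsize F
  have hne : ∑ x, (η.1 x : ℝ) - ∑ x, (ξ.1 x : ℝ) ≠ 0 :=
    sub_ne_zero.mpr (by exact_mod_cast hξη.ne')
  have hη := congrFun hg η
  simp only [ann, Pi.mul_apply, Function.comp_apply, c, size, Nat.cast_sum] at hη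
  rw [hη, inv_mul_cancel_left₀ hne]

/-- **Averaging over one-particle removals** (Proposition 3.2): for a consistent,
particle-number-conserving configuration process, time-dependent factorial moments of
order `|ξ|` started from `η` are an average of the same moments started from
configurations with one particle removed. -/
theorem stmt7 {V : Type*} [Fintype V] [DecidableEq V] (N : ℕ)
    (L : (Conf V N → ℝ) →ₗ[ℝ] (Conf V N → ℝ))
    (hcomm : ∀ f, L (ann f) = ann (L f))
    (hsector : ∀ k ≤ N, ∀ f : Conf V N → ℝ,
        (∀ η : Conf V N, (∑ x, η.1 x) ≠ k → f η = 0) →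
        ∀ η : Conf V N, (∑ x, η.1 x) ≠ k → L f η = 0)
    (t : ℝ) (ξ η : Conf V N)
    (hξ : 1 ≤ ∑ x, ξ.1 x) (hξη : (∑ x, ξ.1 x) < ∑ x, η.1 x) :
    expOp t L (fun ζ => (Ffun ξ ζ : ℝ)) η
      = ((∑ x, η.1 x : ℝ) - (∑ x, ξ.1 x : ℝ))⁻¹ *
          ∑ i : V, (η.1 i : ℝ) * expOp t L (fun ζ => (Ffun ξ ζ : ℝ)) (removeAt η i) :=
  stmt7_general N L hcomm hsector t ξ η hξη
end
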